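/- arXiv:2204.05111 — 4 statements merged into one kernel-verified Lean document; each statement's English description precedes it below -/
import Mathlib

section
/- The function L(z₁,z₂) = log(z₁ e^{-i log|z₂|²}) + i log|z₂|², defined using the principal branch of the logarithm, is holomorphic on the unbounded worm W = { (z₁,z₂) : |z₁ - e^{i log|z₂|²}|² < 1, z₂ ≠ 0 }. -/
/-- The unbounded non-smooth worm `W`. -/
def wormW : Set (ℂ × ℂ) :=
  {z | z.2 ≠ 0 ∧
    ‖z.1 - Complex.exp (Complex.I * (Real.log (‖z.2‖ ^ 2) : ℂ))‖ ^ 2 < 1}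

/-- The function `L(z) = log(z₁ e^{-i log|z₂|²}) + i log|z₂|²`, with the principal
branch of the logarithm. -/
noncomputable def Lfun (z : ℂ × ℂ) : ℂ :=
  Complex.log (z.1 * Complex.exp (-Complex.I * (Real.log (‖z.2‖ ^ 2) : ℂ))) +
    Complex.I * (Real.log (‖z.2‖ ^ 2) : ℂ)

open Complex Real

lemma log_mul_exp_neg (w : ℂ) (t : ℝ) (hw : w ≠ 0) (h1 : -π < w.arg - t)
    (h2 : w.arg - t ≤ π) :
    Complex.log (w * Complex.exp (-(t : ℂ) * Complex.I)) =
      Complex.log w - (t : ℂ) * Complex.I := by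
  have hmul : w * Complex.exp (-(t : ℂ) * Complex.I) =
      Complex.exp (Complex.log w - (t : ℂ) * Complex.I) := by
    rw [sub_eq_add_neg, Complex.exp_add, Complex.exp_log hw, neg_mul]
  have him : (Complex.log w - (t : ℂ) * Complex.I).im = w.arg - t := by
    simp [Complex.log_im]
  rw [hmul, Complex.log_exp (by rw [him]; exact h1) (by rw [him]; exact h2)]

set_option maxHeartbeats 1000000 in
theorem Lfun_holomorphic : DifferentiableOn ℂ Lfun wormW := by
  intro z hz
  obtain ⟨hz2, hzlt⟩ := hz
  set θ : ℂ × ℂ → ℝ := fun z => Real.log (‖z.2‖ ^ 2) with hθ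
  set θ₀ : ℝ := θ z with hθ₀
  set c : ℂ := Complex.exp (-Complex.I * (θ₀ : ℂ)) with hc
  have hzlt' : ‖z.1 - Complex.exp (Complex.I * (θ₀ : ℂ))‖ ^ 2 < 1 := hzlt
  -- real part of z.1 * c is positive
  have hwre : 0 < (z.1 * c).re := by
    have hcabs : ‖c‖ = 1 := by
      rw [hc]; simpa using Complex.norm_exp (-Complex.I * (θ₀ : ℂ))
    have key : (z.1 - Complex.exp (Complex.I * (θ₀ : ℂ))) * c = z.1 * c - 1 := by
      rw [sub_mul, hc, ← Complex.exp_add,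
        show Complex.I * (θ₀ : ℂ) + -Complex.I * (θ₀ : ℂ) = 0 by ring, Complex.exp_zero]
    have habs : ‖z.1 * c - 1‖ < 1 := by
      rw [← key, norm_mul, hcabs, mul_one]
      nlinarith [norm_nonneg (z.1 - Complex.exp (Complex.I * (θ₀ : ℂ)))]
    have hn : Complex.normSq (z.1 * c - 1) < 1 := by
      rw [← Complex.sq_norm]
      nlinarith [norm_nonneg (z.1 * c - 1)]
    have hexp := Complex.normSq_apply (z.1 * c - 1)
    rw [Complex.sub_re, Complex.sub_im, Complex.one_re, Complex.one_im] at hexp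
    nlinarith [sq_nonneg (z.1 * c).im, sq_nonneg (z.1 * c).re]
  -- g is the local holomorphic model
  set g : ℂ × ℂ → ℂ := fun w => Complex.log (w.1 * c) + Complex.I * (θ₀ : ℂ) with hg
  have hgdiff : DifferentiableAt ℂ g z := by
    apply DifferentiableAt.add_const
    apply DifferentiableAt.clog
    · exact (differentiable_fst.differentiableAt).mul_const c
    · exact Complex.mem_slitPlane_iff.mpr (Or.inl hwre)
  -- eventual equality
  have habs2 : ContinuousAt (fun w : ℂ × ℂ => ‖w.2‖ ^ 2) z :=
    ((continuous_norm.comp continuous_snd).pow 2).continuousAt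
  have hθcont : ContinuousAt θ z :=
    ContinuousAt.comp (g := Real.log) (f := fun w : ℂ × ℂ => ‖w.2‖ ^ 2) (x := z)
      (Real.continuousAt_log (pow_ne_zero 2 (norm_ne_zero_iff.mpr hz2))) habs2
  have hre_cont : ContinuousAt (fun w : ℂ × ℂ => (w.1 * c).re) z :=
    (Complex.continuous_re.comp (continuous_fst.mul continuous_const)).continuousAt
  have E1 : ∀ᶠ w in nhds z, 0 < (w.1 * c).re :=
    hre_cont.eventually (eventually_gt_nhds hwre)
  have E2 : ∀ᶠ w in nhds z, |θ w - θ₀| < π / 2 := by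
    have hco : ContinuousAt (fun w => |θ w - θ₀|) z := (hθcont.sub continuousAt_const).abs
    apply hco.eventually (eventually_lt_nhds ?_)
    simp only [hθ₀, sub_self, abs_zero]
    exact Real.pi_div_two_pos
  have heq : Lfun =ᶠ[nhds z] g := by
    filter_upwards [E1, E2] with w h1 h2
    have hwne : w.1 * c ≠ 0 := by
      intro h; rw [h] at h1; simp at h1
    have harg : |(w.1 * c).arg| < π / 2 :=
      Complex.abs_arg_lt_pi_div_two_iff.mpr (Or.inl h1)
    obtain ⟨ha1, ha2⟩ := abs_lt.mp harg
    obtain ⟨hb1, hb2⟩ := abs_lt.mp h2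
    have hsplit : (w.1 * c) * Complex.exp (-((θ w - θ₀ : ℝ) : ℂ) * Complex.I) =
        w.1 * Complex.exp (-Complex.I * ((θ w : ℝ) : ℂ)) := by
      rw [hc, mul_assoc, ← Complex.exp_add]
      congr 1
      push_cast
      ring
    have hlog := log_mul_exp_neg (w.1 * c) (θ w - θ₀) hwne
      (by linarith) (by linarith [Real.pi_pos])
    show Complex.log (w.1 * Complex.exp (-Complex.I * ((θ w : ℝ) : ℂ))) +
        Complex.I * ((θ w : ℝ) : ℂ) = g w
    rw [← hsplit, hlog, hg]
    push_cast
    ring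
  exact (hgdiff.congr_of_eventuallyEq heq).differentiableWithinAt
end

section
/- Let ρ(z₁,z₂) = |z₁|² − 2 Re(z₁ e^{-i log|z₂|²}) + φ(log((λ|z₂|)^{-2})) be the defining function of Z_λ. If (z₁,z₂) ∈ ∂Z_λ (i.e. ρ(z₁,z₂) = 0 with z₂ ≠ 0) and ∂ρ/∂z₁ = 0 at that point, then z₁ = e^{i log|z₂|²}, φ(log((λ|z₂|)^{-2})) = 1, and ∂ρ/∂z₂ ≠ 0 at that point. Consequently the gradient of ρ does not vanish on ∂Z_λ. -/
/-- Defining function `ρ` of `Z_λ`: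
`ρ(z₁,z₂) = |z₁|² − 2 Re(z₁ e^{-i log|z₂|²}) + φ(log((λ|z₂|)^{-2}))`. -/
noncomputable def rho (φ : ℝ → ℝ) (l : ℝ) (z : ℂ × ℂ) : ℝ :=
  ‖z.1‖ ^ 2 -
    2 * (z.1 * Complex.exp (-Complex.I * (Real.log (‖z.2‖ ^ 2) : ℂ))).re +
    φ (-2 * Real.log (l * ‖z.2‖))

/-- `∂ρ/∂z₁ = z̄₁ − e^{-i log|z₂|²}`. -/
noncomputable def d1rho (z : ℂ × ℂ) : ℂ :=
  (starRingEnd ℂ) z.1 - Complex.exp (-Complex.I * (Real.log (‖z.2‖ ^ 2) : ℂ))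

/-- `∂ρ/∂z₂ = -(2/z₂) Im(z₁ e^{-i log|z₂|²}) − (1/z₂) φ'(log((λ|z₂|)^{-2}))`. -/
noncomputable def d2rho (φ : ℝ → ℝ) (l : ℝ) (z : ℂ × ℂ) : ℂ :=
  -(2 / z.2) * ((z.1 * Complex.exp (-Complex.I * (Real.log (‖z.2‖ ^ 2) : ℂ))).im : ℂ) -
    (1 / z.2) * ((deriv φ (-2 * Real.log (l * ‖z.2‖)) : ℝ) : ℂ)

/-- If `φ` is smooth, convex, vanishes exactly on `(-∞,0]` and `φ s = 1`, then
`deriv φ s > 0`. -/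
lemma deriv_pos_of_eq_one (φ : ℝ → ℝ) (hsmooth : ContDiff ℝ (⊤ : ℕ∞) φ)
    (hconv : ConvexOn ℝ Set.univ φ) (hzero : φ ⁻¹' {0} = Set.Iic 0)
    {s : ℝ} (hs : φ s = 1) : 0 < deriv φ s := by
  have hφ0 : φ 0 = 0 := by
    have : (0 : ℝ) ∈ φ ⁻¹' {0} := by rw [hzero]; exact Set.self_mem_Iic
    simpa using this
  have hspos : 0 < s := by
    by_contra h
    push_neg at h
    have : s ∈ φ ⁻¹' {0} := by rw [hzero]; exact h
    simp [hs] at this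
  have hdiff : DifferentiableAt ℝ φ s := (hsmooth.differentiable (by simp)).differentiableAt
  have hslope : slope φ 0 s ≤ deriv φ s :=
    hconv.slope_le_deriv (Set.mem_univ 0) (Set.mem_univ s) hspos hdiff
  have : slope φ 0 s = 1 / s := by
    rw [slope_def_field, hs, hφ0]; ring
  rw [this] at hslope
  exact lt_of_lt_of_le (by positivity) hslope

theorem boundary_gradient_nonvanishing (φ : ℝ → ℝ)
    (hsmooth : ContDiff ℝ (⊤ : ℕ∞) φ) (hnonneg : ∀ t, 0 ≤ φ t)
    (hconv : ConvexOn ℝ Set.univ φ) (hzero : φ ⁻¹' {0} = Set.Iic 0)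
    (a : ℝ) (ha : 0 < a) (haφ : φ a = 1) (l : ℝ) (hl : 0 < l) :
    (∀ z : ℂ × ℂ, z.2 ≠ 0 → rho φ l z = 0 → d1rho z = 0 →
      z.1 = Complex.exp (Complex.I * (Real.log (‖z.2‖ ^ 2) : ℂ)) ∧
      φ (-2 * Real.log (l * ‖z.2‖)) = 1 ∧
      d2rho φ l z ≠ 0) ∧
    ∀ z : ℂ × ℂ, z.2 ≠ 0 → rho φ l z = 0 → ¬(d1rho z = 0 ∧ d2rho φ l z = 0) := by
  have main : ∀ z : ℂ × ℂ, z.2 ≠ 0 → rho φ l z = 0 → d1rho z = 0 →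
      z.1 = Complex.exp (Complex.I * (Real.log (‖z.2‖ ^ 2) : ℂ)) ∧
      φ (-2 * Real.log (l * ‖z.2‖)) = 1 ∧
      d2rho φ l z ≠ 0 := by
    intro z hz2 hrho hd1
    set t : ℝ := Real.log (‖z.2‖ ^ 2) with ht
    have hconj : (starRingEnd ℂ) z.1 = Complex.exp (-Complex.I * (t : ℂ)) := by
      have := sub_eq_zero.mp hd1
      exact this
    have hz1 : z.1 = Complex.exp (Complex.I * (t : ℂ)) := by
      have h2 := congrArg (starRingEnd ℂ) hconj
      rw [Complex.conj_conj] at h2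
      rw [h2, ← Complex.exp_conj]
      congr 1
      simp [map_mul, Complex.conj_ofReal]
    have hprod : z.1 * Complex.exp (-Complex.I * (t : ℂ)) = 1 := by
      rw [hz1, ← Complex.exp_add]
      norm_num
    have habs : ‖z.1‖ = 1 := by
      rw [hz1, Complex.norm_exp]
      simp
    have hφ1 : φ (-2 * Real.log (l * ‖z.2‖)) = 1 := by
      have : rho φ l z = 1 - 2 * 1 + φ (-2 * Real.log (l * ‖z.2‖)) := by
        rw [rho, habs, ← ht, hprod]
        norm_num
      rw [this] at hrho
      linarith
    have hderiv : 0 < deriv φ (-2 * Real.log (l * ‖z.2‖)) :=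
      deriv_pos_of_eq_one φ hsmooth hconv hzero hφ1
    refine ⟨hz1, hφ1, ?_⟩
    rw [d2rho, ← ht, hprod]
    simp only [Complex.one_im, Complex.ofReal_zero, mul_zero, neg_zero, zero_sub, neg_ne_zero]
    exact mul_ne_zero (one_div_ne_zero hz2) (Complex.ofReal_ne_zero.mpr hderiv.ne')
  exact ⟨main, fun z hz2 hrho ⟨h1, h2⟩ => (main z hz2 hrho h1).2.2 h2⟩
end

section
/- At a boundary point (z₁,z₂) ∈ ∂Z_λ with z₁ = 0, the Levi form of ρ evaluated on the complex tangent vector v = (2 Im(z₁ e^{-i log|z₂|²}) + φ'(log((λ|z₂|)^{-2})), z₂(z̄₁ − e^{-i log|z₂|²})) equals (φ')²(log((λ|z₂|)^{-2})) + (1 − φ(log((λ|z₂|)^{-2})))·(φ(log((λ|z₂|)^{-2})) + φ''(log((λ|z₂|)^{-2}))). In particular, at points (0, z₂) with |z₂| ≥ 1/λ (where φ, φ', φ'' all vanish since log((λ|z₂|)^{-2}) ≤ 0), this Levi form is zero: these are points of weak pseudoconvexity. -/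
/-- The Levi form of `ρ` on the complex tangent vector `v`, evaluated at a
boundary point:
`L_ρ(z;v) = 2 Im(z₁ e^{-i log|z₂|²}) φ' + (φ')² + (1 − φ)(|z₁|² + φ + φ'')`,
where `φ, φ', φ''` are evaluated at `log((λ|z₂|)^{-2}) = -2 log(λ|z₂|)`. -/
noncomputable def leviForm (φ : ℝ → ℝ) (l : ℝ) (z : ℂ × ℂ) : ℝ :=
  2 * (z.1 * Complex.exp (-Complex.I * (Real.log (‖z.2‖ ^ 2) : ℂ))).im *
      deriv φ (-2 * Real.log (l * ‖z.2‖)) +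
    (deriv φ (-2 * Real.log (l * ‖z.2‖))) ^ 2 +
    (1 - φ (-2 * Real.log (l * ‖z.2‖))) *
      (‖z.1‖ ^ 2 + φ (-2 * Real.log (l * ‖z.2‖)) +
        deriv (deriv φ) (-2 * Real.log (l * ‖z.2‖)))

/-- If a smooth function vanishes on `Iic 0`, so does its derivative. -/
lemma deriv_eqOn_zero_aux {g : ℝ → ℝ} (hg : Continuous (deriv g))
    (h0 : ∀ t ≤ (0:ℝ), g t = 0) : ∀ t ≤ (0:ℝ), deriv g t = 0 := by
  have hIio : Set.EqOn (deriv g) (fun _ : ℝ => (0:ℝ)) (Set.Iio 0) := by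
    intro t ht
    have : deriv g t = deriv (fun _ : ℝ => (0:ℝ)) t := by
      apply Filter.EventuallyEq.deriv_eq
      filter_upwards [Iio_mem_nhds ht] with s hs
      exact h0 s (le_of_lt hs)
    simpa using this
  have heq := hIio.closure hg continuous_const
  intro t ht
  exact heq (by rw [closure_Iio]; exact ht)

theorem leviForm_at_z1_zero (φ : ℝ → ℝ)
    (hsmooth : ContDiff ℝ (⊤ : ℕ∞) φ) (hnonneg : ∀ t, 0 ≤ φ t)
    (hconv : ConvexOn ℝ Set.univ φ) (hzero : φ ⁻¹' {0} = Set.Iic 0)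
    (l : ℝ) (hl : 0 < l) (z₂ : ℂ) (hz₂ : z₂ ≠ 0)
    (hbd : rho φ l (0, z₂) = 0) :
    ‖z₂‖ ≥ 1 / l ∧
      leviForm φ l (0, z₂) =
        (deriv φ (-2 * Real.log (l * ‖z₂‖))) ^ 2 +
          (1 - φ (-2 * Real.log (l * ‖z₂‖))) *
            (φ (-2 * Real.log (l * ‖z₂‖)) +
              deriv (deriv φ) (-2 * Real.log (l * ‖z₂‖))) ∧
      leviForm φ l (0, z₂) = 0 := by
  set t := -2 * Real.log (l * ‖z₂‖) with ht
  have habs : 0 < ‖z₂‖ := by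
    simpa [norm_pos_iff] using hz₂
  have hla : 0 < l * ‖z₂‖ := mul_pos hl habs
  -- from the boundary condition, φ t = 0
  have hφt : φ t = 0 := by
    have : rho φ l (0, z₂) = φ t := by
      simp [rho, ht]
    rwa [this] at hbd
  -- hence t ≤ 0
  have htle : t ≤ 0 := by
    have : t ∈ φ ⁻¹' {0} := by simp [hφt]
    rw [hzero] at this
    exact this
  -- φ vanishes on Iic 0
  have hφ0 : ∀ s ≤ (0:ℝ), φ s = 0 := by
    intro s hs
    have : s ∈ φ ⁻¹' {0} := by rw [hzero]; exact hs
    simpa using this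
  -- first part: |z₂| ≥ 1/l
  have h1 : ‖z₂‖ ≥ 1 / l := by
    have hlog : 0 ≤ Real.log (l * ‖z₂‖) := by nlinarith [htle]
    have h1le : 1 ≤ l * ‖z₂‖ := by
      by_contra h
      push_neg at h
      have := Real.log_neg hla h
      linarith
    rw [ge_iff_le, div_le_iff₀ hl]
    linarith [h1le, mul_comm l (‖z₂‖)]
  -- derivative facts
  have hsd : ContDiff ℝ (↑(⊤:ℕ∞)) (deriv φ) := (contDiff_infty_iff_deriv.mp (hsmooth.of_le (by simp))).2
  have hcd1 : Continuous (deriv φ) := hsd.continuous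
  have hd1 : ∀ s ≤ (0:ℝ), deriv φ s = 0 := deriv_eqOn_zero_aux hcd1 hφ0
  have hcd2 : Continuous (deriv (deriv φ)) :=
    (contDiff_infty_iff_deriv.mp hsd).2.continuous
  have hd2 : ∀ s ≤ (0:ℝ), deriv (deriv φ) s = 0 := deriv_eqOn_zero_aux hcd2 hd1
  -- leviForm simplification
  have h2 : leviForm φ l (0, z₂) =
      (deriv φ t) ^ 2 + (1 - φ t) * (φ t + deriv (deriv φ) t) := by
    simp [leviForm, ht]
  refine ⟨h1, h2, ?_⟩
  rw [h2, hφt, hd1 t htle, hd2 t htle]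
  ring
end

section
/- Let μ > 0, p ∈ (0,∞], α ∈ ℂ with Re α > −2/p, j ∈ ℤ, c ∈ ℝ with c > log 2, and m ∈ ℕ with m > 1/p, and suppose Im α = j/2 + 1/p. Then the function F(z) = e^{α L(z)} z₂^j / (L(z) − c)^m, with L(z) = log(z₁ e^{-i log|z₂|²}) + i log|z₂|², belongs to the Bergman space A^p(W) = L^p(W) ∩ Hol(W) of the unbounded worm W. In particular A^p(W) is infinite dimensional for every p ∈ (0,∞]. -/
open MeasureTheory
open scoped ENNReal

/-- `F(z) = e^{α L(z)} z₂^j / (L(z) − c)^m`. -/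
noncomputable def Ffun (α : ℂ) (c : ℝ) (j : ℤ) (m : ℕ) (z : ℂ × ℂ) : ℂ :=
  Complex.exp (α * Lfun z) * z.2 ^ j / (Lfun z - (c : ℂ)) ^ m

noncomputable def sfun (z : ℂ × ℂ) : ℝ := Real.log (‖z.2‖ ^ 2)

noncomputable def zfun (z : ℂ × ℂ) : ℂ := z.1 * Complex.exp (-Complex.I * (sfun z : ℂ))

lemma Lfun_eq (z : ℂ × ℂ) : Lfun z = Complex.log (zfun z) + Complex.I * (sfun z : ℂ) := rfl

lemma abs_zfun_sub_one {z : ℂ × ℂ} :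
    ‖zfun z - 1‖ =
      ‖z.1 - Complex.exp (Complex.I * (sfun z : ℂ))‖ := by
  have h : zfun z - 1 = (z.1 - Complex.exp (Complex.I * (sfun z : ℂ))) *
      Complex.exp (-Complex.I * (sfun z : ℂ)) := by
    rw [sub_mul, zfun]
    congr 1
    rw [← Complex.exp_add]
    norm_num
  rw [h, norm_mul, Complex.norm_exp]
  simp

/-- basic facts on the worm -/
lemma worm_facts {z : ℂ × ℂ} (hz : z ∈ wormW) :
    ‖zfun z - 1‖ < 1 ∧ 0 < (zfun z).re ∧ zfun z ≠ 0 ∧ z.1 ≠ 0 ∧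
      ‖z.1‖ < 2 ∧ ‖zfun z‖ = ‖z.1‖ := by
  obtain ⟨hz2, hlt⟩ := hz
  have h1 : ‖zfun z - 1‖ < 1 := by
    rw [abs_zfun_sub_one]
    simp only [sfun]
    nlinarith [norm_nonneg (z.1 - Complex.exp (Complex.I * (sfun z : ℂ)))]
  have hre : 0 < (zfun z).re := by
    have h2 : ‖zfun z - 1‖ ^ 2 < 1 := by nlinarith [norm_nonneg (zfun z - 1)]
    rw [Complex.sq_norm, Complex.normSq_apply] at h2
    simp only [Complex.sub_re, Complex.sub_im, Complex.one_re, Complex.one_im] at h2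
    nlinarith [sq_nonneg (zfun z).re, sq_nonneg (zfun z).im]
  have hz0 : zfun z ≠ 0 := by
    intro h
    rw [h] at hre
    simp at hre
  have habs : ‖zfun z‖ = ‖z.1‖ := by
    rw [zfun, norm_mul, Complex.norm_exp]
    simp
  have hz1 : z.1 ≠ 0 := by
    intro h
    apply hz0
    rw [zfun, h, zero_mul]
  refine ⟨h1, hre, hz0, hz1, ?_, habs⟩
  calc ‖z.1‖ = ‖zfun z‖ := habs.symm
    _ ≤ ‖zfun z - 1‖ + ‖(1 : ℂ)‖ := by
        simpa using norm_add_le (zfun z - 1) 1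
    _ < 2 := by rw [norm_one]; linarith

lemma Lfun_re {z : ℂ × ℂ} (_ : z ∈ wormW) : (Lfun z).re = Real.log (‖z.1‖) := by
  rw [Lfun_eq, Complex.add_re, Complex.log_re, (worm_facts ‹_›).2.2.2.2.2]
  simp

lemma Lfun_im (z : ℂ × ℂ) : (Lfun z).im = (zfun z).arg + sfun z := by
  rw [Lfun_eq, Complex.add_im, Complex.log_im]
  simp

lemma arg_zfun_lt {z : ℂ × ℂ} (hz : z ∈ wormW) : |(zfun z).arg| < Real.pi / 2 :=
  Complex.abs_arg_lt_pi_div_two_iff.2 (Or.inl (worm_facts hz).2.1)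

lemma Lfun_re_lt {z : ℂ × ℂ} (hz : z ∈ wormW) : (Lfun z).re < Real.log 2 := by
  rw [Lfun_re hz]
  have h := (worm_facts hz).2.2.2.1
  exact Real.log_lt_log (by simpa [norm_pos_iff] using h) (worm_facts hz).2.2.2.2.1

lemma Lfun_sub_ne {z : ℂ × ℂ} (hz : z ∈ wormW) {c : ℝ} (hc : Real.log 2 < c) :
    Lfun z - (c : ℂ) ≠ 0 := by
  intro h
  have : (Lfun z - (c : ℂ)).re = 0 := by rw [h]; simp
  rw [Complex.sub_re, Complex.ofReal_re] at this
  have := Lfun_re_lt hz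
  linarith

lemma Lfun_sub_abs_ge {z : ℂ × ℂ} (hz : z ∈ wormW) {c : ℝ} (hc : Real.log 2 < c) :
    c - Real.log 2 ≤ ‖Lfun z - (c : ℂ)‖ := by
  have h1 : (Lfun z - (c : ℂ)).re = (Lfun z).re - c := by simp [Complex.sub_re]
  have h2 := Lfun_re_lt hz
  calc c - Real.log 2 ≤ -((Lfun z - (c : ℂ)).re) := by rw [h1]; linarith
    _ ≤ |(Lfun z - (c : ℂ)).re| := neg_le_abs _
    _ ≤ ‖Lfun z - (c : ℂ)‖ := Complex.abs_re_le_norm _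

lemma Lfun_sub_abs_ge' {z : ℂ × ℂ} (hz : z ∈ wormW) (c : ℝ) :
    |sfun z| - Real.pi / 2 ≤ ‖Lfun z - (c : ℂ)‖ := by
  have h1 : (Lfun z - (c : ℂ)).im = (zfun z).arg + sfun z := by
    rw [Complex.sub_im, Lfun_im]
    simp
  have h2 := arg_zfun_lt hz
  have key : |sfun z| ≤ |(zfun z).arg + sfun z| + |(zfun z).arg| := by
    calc |sfun z| = |((zfun z).arg + sfun z) + (-(zfun z).arg)| := by
          rw [show ((zfun z).arg + sfun z) + (-(zfun z).arg) = sfun z by ring]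
      _ ≤ |(zfun z).arg + sfun z| + |(-(zfun z).arg)| := abs_add_le _ _
      _ = |(zfun z).arg + sfun z| + |(zfun z).arg| := by rw [abs_neg]
  calc |sfun z| - Real.pi / 2 ≤ |(zfun z).arg + sfun z| := by linarith
    _ = |(Lfun z - (c : ℂ)).im| := by rw [h1]
    _ ≤ ‖Lfun z - (c : ℂ)‖ := Complex.abs_im_le_norm _

lemma sfun_continuousAt {z : ℂ × ℂ} (hz : z.2 ≠ 0) : ContinuousAt sfun z := by
  have h1 : ContinuousAt (fun z : ℂ × ℂ => ‖z.2‖ ^ 2) z :=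
    ((continuous_norm.comp continuous_snd).pow 2).continuousAt
  have h2 : ContinuousAt Real.log (‖z.2‖ ^ 2) :=
    Real.continuousAt_log (ne_of_gt (pow_pos (norm_pos_iff.mpr hz) 2))
  exact ContinuousAt.comp h2 h1

lemma wormW_isOpen : IsOpen wormW := by
  have hU : IsOpen {z : ℂ × ℂ | z.2 ≠ 0} := isOpen_ne_fun continuous_snd continuous_const
  have hcont : ContinuousOn
      (fun z : ℂ × ℂ =>
        ‖z.1 - Complex.exp (Complex.I * (Real.log (‖z.2‖ ^ 2) : ℂ))‖ ^ 2)
      {z : ℂ × ℂ | z.2 ≠ 0} := by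
    intro z hz
    apply ContinuousAt.continuousWithinAt
    have hs : ContinuousAt (fun z : ℂ × ℂ => ((Real.log (‖z.2‖ ^ 2) : ℝ) : ℂ)) z :=
      Complex.continuous_ofReal.continuousAt.comp (sfun_continuousAt hz)
    have h2 : ContinuousAt
        (fun z : ℂ × ℂ => Complex.exp (Complex.I * (Real.log (‖z.2‖ ^ 2) : ℂ))) z :=
      Complex.continuous_exp.continuousAt.comp (hs.const_mul Complex.I)
    exact (continuous_norm.continuousAt.comp
      (continuous_fst.continuousAt.sub h2)).pow 2
  have heq : wormW = {z : ℂ × ℂ | z.2 ≠ 0} ∩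
      (fun z : ℂ × ℂ =>
        ‖z.1 - Complex.exp (Complex.I * (Real.log (‖z.2‖ ^ 2) : ℂ))‖ ^ 2)
        ⁻¹' Set.Iio 1 := by
    ext z
    simp only [wormW, Set.mem_setOf_eq, Set.mem_inter_iff, Set.mem_preimage, Set.mem_Iio]
  rw [heq]
  exact hcont.isOpen_inter_preimage hU isOpen_Iio

lemma Lfun_differentiableAt {z₀ : ℂ × ℂ} (hz : z₀ ∈ wormW) : DifferentiableAt ℂ Lfun z₀ := by
  set s₀ : ℝ := sfun z₀ with hs₀
  set e : ℂ := Complex.exp (-Complex.I * (s₀ : ℂ)) with he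
  have hze : zfun z₀ = z₀.1 * e := rfl
  have hre : 0 < (z₀.1 * e).re := by rw [← hze]; exact (worm_facts hz).2.1
  have hG : DifferentiableAt ℂ
      (fun z : ℂ × ℂ => Complex.log (z.1 * e) + Complex.I * (s₀ : ℂ)) z₀ := by
    have hm : z₀.1 * e ∈ Complex.slitPlane := Or.inl hre
    have h1 : DifferentiableAt ℂ (fun z : ℂ × ℂ => z.1 * e) z₀ :=
      (differentiableAt_fst).mul_const e
    exact ((Complex.differentiableAt_log hm).comp z₀ h1).add_const _
  have heq : Lfun =ᶠ[nhds z₀] fun z : ℂ × ℂ => Complex.log (z.1 * e) + Complex.I * (s₀ : ℂ) := by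
    have hc1 : ContinuousAt (fun z : ℂ × ℂ => (z.1 * e).re) z₀ :=
      Complex.continuous_re.continuousAt.comp ((continuous_fst.mul continuous_const).continuousAt)
    have h1 : ∀ᶠ z : ℂ × ℂ in nhds z₀, 0 < (z.1 * e).re := hc1 (Ioi_mem_nhds hre)
    have h2 : ∀ᶠ z : ℂ × ℂ in nhds z₀, |sfun z - s₀| < Real.pi / 4 := by
      have := (sfun_continuousAt hz.1) (Metric.ball_mem_nhds s₀
        (by positivity : (0:ℝ) < Real.pi / 4))
      filter_upwards [this] with z' hz'
      simpa [Real.dist_eq] using hz'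
    filter_upwards [h1, h2] with z hz1 hz2
    have hzne : z.1 * e ≠ 0 := fun h => by rw [h] at hz1; simp at hz1
    set Δ : ℝ := sfun z - s₀ with hΔ
    set w : ℂ := Complex.log (z.1 * e) - Complex.I * (Δ : ℂ) with hw
    have hkey : Complex.exp w = z.1 * Complex.exp (-Complex.I * (sfun z : ℂ)) := by
      rw [hw, Complex.exp_sub, Complex.exp_log hzne]
      have hcast : (Δ : ℂ) = (sfun z : ℂ) - (s₀ : ℂ) := by push_cast [hΔ]; ring
      have hexp : -Complex.I * (s₀ : ℂ) = -Complex.I * (sfun z : ℂ) + Complex.I * (Δ : ℂ) := by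
        rw [hcast]; ring
      rw [div_eq_iff (Complex.exp_ne_zero _), mul_assoc, ← Complex.exp_add, ← hexp, he]
    have harg : |(z.1 * e).arg| < Real.pi / 2 :=
      Complex.abs_arg_lt_pi_div_two_iff.2 (Or.inl hz1)
    have him : w.im = (z.1 * e).arg - Δ := by
      rw [hw, Complex.sub_im, Complex.log_im]
      simp
    have hlog : Complex.log (z.1 * Complex.exp (-Complex.I * (sfun z : ℂ))) = w := by
      rw [← hkey, Complex.log_exp]
      · rw [him]
        have := Real.pi_pos
        cases abs_lt.1 harg; cases abs_lt.1 hz2; linarith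
      · rw [him]
        have := Real.pi_pos
        cases abs_lt.1 harg; cases abs_lt.1 hz2; linarith
    show Complex.log (z.1 * Complex.exp (-Complex.I * (sfun z : ℂ))) +
        Complex.I * (sfun z : ℂ) = _
    rw [hlog, hw]
    have : (sfun z : ℂ) = (s₀ : ℂ) + (Δ : ℂ) := by push_cast [hΔ]; ring
    rw [this]; ring
  exact hG.congr_of_eventuallyEq heq

lemma Ffun_differentiableOn {c : ℝ} (hc : Real.log 2 < c) (α : ℂ) (j : ℤ) (m : ℕ) :
    DifferentiableOn ℂ (Ffun α c j m) wormW := by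
  intro z hz
  have hL : DifferentiableAt ℂ Lfun z := Lfun_differentiableAt hz
  have h1 : DifferentiableAt ℂ (fun z : ℂ × ℂ => Complex.exp (α * Lfun z)) z :=
    (hL.const_mul α).cexp
  have h2 : DifferentiableAt ℂ (fun z : ℂ × ℂ => z.2 ^ j) z :=
    (differentiableAt_snd).zpow (Or.inl hz.1)
  have h3 : DifferentiableAt ℂ (fun z : ℂ × ℂ => (Lfun z - (c : ℂ)) ^ m) z :=
    (hL.sub_const _).pow m
  have h4 : DifferentiableAt ℂ
      (fun z : ℂ × ℂ =>
        Complex.exp (α * Lfun z) * z.2 ^ j * ((Lfun z - (c : ℂ)) ^ m)⁻¹) z :=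
    (h1.mul h2).mul (h3.inv (pow_ne_zero m (Lfun_sub_ne hz hc)))
  have hfe : Ffun α c j m = fun z : ℂ × ℂ =>
      Complex.exp (α * Lfun z) * z.2 ^ j * ((Lfun z - (c : ℂ)) ^ m)⁻¹ := by
    funext z; exact div_eq_mul_inv _ _
  rw [hfe]
  exact h4.differentiableWithinAt

open Real in
lemma lintegral_complex_radial (g : ℝ → ℝ≥0∞) (hg : Measurable g) :
    ∫⁻ z : ℂ, g (‖z‖) =
      ENNReal.ofReal (2 * Real.pi) * ∫⁻ r in Set.Ioi (0 : ℝ), ENNReal.ofReal r * g r := by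
  have hmeas : Measurable fun z : ℂ => g (‖z‖) :=
    hg.comp continuous_norm.measurable
  have h0 : ∫⁻ z : ℂ, g (‖z‖) =
      ∫⁻ p : ℝ × ℝ, g (‖Complex.measurableEquivRealProd.symm p‖) :=
    ((Complex.volume_preserving_equiv_real_prod.symm).lintegral_comp hmeas).symm
  set F : ℝ × ℝ → ℝ≥0∞ := fun p => g (‖Complex.measurableEquivRealProd.symm p‖)
    with hF
  have h2 : ∫⁻ p : ℝ × ℝ, F p = ∫⁻ p in polarCoord.source, F p := by
    rw [Measure.restrict_congr_set polarCoord_source_ae_eq_univ, Measure.restrict_univ]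
  set B : ℝ × ℝ → ℝ × ℝ →L[ℝ] ℝ × ℝ := fun p =>
    LinearMap.toContinuousLinearMap (Matrix.toLin (Module.Basis.finTwoProd ℝ) (Module.Basis.finTwoProd ℝ)
      !![cos p.2, -p.1 * sin p.2; sin p.2, p.1 * cos p.2]) with hB
  have B_det : ∀ p : ℝ × ℝ, (B p).det = p.1 := by
    intro p
    conv_rhs => rw [← one_mul p.1, ← cos_sq_add_sin_sq p.2]
    simp only [hB, neg_mul, LinearMap.det_toContinuousLinearMap, LinearMap.det_toLin,
      Matrix.det_fin_two_of, sub_neg_eq_add]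
    ring
  have h3 : ∫⁻ p in polarCoord.source, F p =
      ∫⁻ p in polarCoord.target, ENNReal.ofReal |(B p).det| * F (polarCoord.symm p) := by
    rw [← polarCoord.symm_image_target_eq_source]
    exact lintegral_image_eq_lintegral_abs_det_fderiv_mul volume
      polarCoord.open_target.measurableSet
      (fun p _ => (hasFDerivAt_polarCoord_symm p).hasFDerivWithinAt)
      polarCoord.symm.injOn F
  have h4 : ∫⁻ p in polarCoord.target, ENNReal.ofReal |(B p).det| * F (polarCoord.symm p) =
      ∫⁻ p in polarCoord.target, ENNReal.ofReal p.1 * g p.1 := by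
    apply setLIntegral_congr_fun polarCoord.open_target.measurableSet
    intro p hp
    show ENNReal.ofReal |(B p).det| * F (polarCoord.symm p) = ENNReal.ofReal p.1 * g p.1
    have hp1 : 0 < p.1 := hp.1
    have habs : ‖Complex.measurableEquivRealProd.symm (polarCoord.symm p)‖ = p.1 := by
      have hcx : Complex.measurableEquivRealProd.symm (polarCoord.symm p) =
          Complex.polarCoord.symm p := by
        rw [Complex.measurableEquivRealProd_symm_apply, polarCoord_symm_apply,
          Complex.polarCoord_symm_apply]
        simp only [Complex.ext_iff, Complex.mul_re, Complex.mul_im, Complex.add_re,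
          Complex.add_im, Complex.ofReal_re, Complex.ofReal_im, Complex.I_re, Complex.I_im]
        constructor <;> ring
      rw [hcx, Complex.norm_polarCoord_symm, abs_of_pos hp1]
    rw [B_det, abs_of_pos hp1, hF]
    simp only [habs]
  rw [h0, h2, h3, h4, polarCoord_target]
  rw [Measure.volume_eq_prod, ← Measure.prod_restrict]
  have hf : Measurable fun r : ℝ => ENNReal.ofReal r * g r :=
    ENNReal.measurable_ofReal.mul hg
  have h6 := lintegral_prod_mul (μ := volume.restrict (Set.Ioi (0 : ℝ)))
    (ν := volume.restrict (Set.Ioo (-Real.pi) Real.pi))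
    hf.aemeasurable (aemeasurable_const (b := (1 : ℝ≥0∞)))
  simp only [mul_one] at h6
  rw [h6, lintegral_one, Measure.restrict_apply_univ, Real.volume_Ioo]
  rw [mul_comm]
  congr 1
  ring

lemma integrable_log_weight {q : ℝ} (hq : 1 < q) :
    IntegrableOn (fun r : ℝ => r⁻¹ * (1 + 2 * |Real.log r|) ^ (-q)) (Set.Ioi (0 : ℝ)) := by
  set f : ℝ → ℝ := fun r => r⁻¹ * (1 + 2 * |Real.log r|) ^ (-q) with hf
  -- integrability on (1, ∞)
  have h1 : IntegrableOn f (Set.Ioi (1 : ℝ)) := by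
    set g : ℝ → ℝ := fun r => (1 + 2 * Real.log r) ^ (1 - q) / (2 * (1 - q)) with hg
    have hderiv : ∀ x ∈ Set.Ici (1 : ℝ), HasDerivAt g (x⁻¹ * (1 + 2 * Real.log x) ^ (-q)) x := by
      intro x hx
      have hx0 : (0 : ℝ) < x := lt_of_lt_of_le one_pos hx
      have hlog : (0 : ℝ) ≤ Real.log x := Real.log_nonneg hx
      have hu : (0 : ℝ) < 1 + 2 * Real.log x := by linarith
      have h1' : HasDerivAt Real.log x⁻¹ x := Real.hasDerivAt_log (ne_of_gt hx0)
      have h2' : HasDerivAt (fun x : ℝ => 1 + 2 * Real.log x) (2 * x⁻¹) x :=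
        (h1'.const_mul 2).const_add 1
      have h3' : HasDerivAt (fun y : ℝ => y ^ (1 - q))
          ((1 - q) * (1 + 2 * Real.log x) ^ (1 - q - 1)) (1 + 2 * Real.log x) :=
        Real.hasDerivAt_rpow_const (Or.inl (ne_of_gt hu))
      have h4' := (h3'.comp x h2').div_const (2 * (1 - q))
      refine HasDerivAt.congr_deriv h4' ?_
      rw [show (1 : ℝ) - q - 1 = -q by ring]
      have hq1 : (1 : ℝ) - q ≠ 0 := by intro h; apply absurd hq; rw [show q = 1 by linarith]; simp
      field_simp
    have hnonneg : ∀ x ∈ Set.Ioi (1 : ℝ), 0 ≤ x⁻¹ * (1 + 2 * Real.log x) ^ (-q) := by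
      intro x hx
      have hx0 : (0 : ℝ) < x := lt_trans one_pos hx
      have hu : (0 : ℝ) ≤ 1 + 2 * Real.log x := by
        have := Real.log_nonneg (le_of_lt hx); linarith
      positivity
    have htend : Filter.Tendsto g Filter.atTop (nhds 0) := by
      have hcomp : Filter.Tendsto (fun x : ℝ => 1 + 2 * Real.log x) Filter.atTop Filter.atTop :=
        Filter.tendsto_atTop_add_const_left _ 1
          (Filter.Tendsto.const_mul_atTop two_pos Real.tendsto_log_atTop)
      have hrpow : Filter.Tendsto (fun y : ℝ => y ^ (1 - q)) Filter.atTop (nhds 0) := by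
        rw [show (1 : ℝ) - q = -(q - 1) by ring]
        exact tendsto_rpow_neg_atTop (by linarith)
      have := (hrpow.comp hcomp).div_const (2 * (1 - q))
      simpa using this
    have hint := integrableOn_Ioi_deriv_of_nonneg' hderiv hnonneg htend
    apply hint.congr_fun ?_ measurableSet_Ioi
    intro x hx
    have : |Real.log x| = Real.log x := abs_of_nonneg (Real.log_nonneg (le_of_lt hx))
    rw [hf]; simp only [this]
  -- transfer to (0,1) by inversion
  have h2 : IntegrableOn f (Set.Ioo (0 : ℝ) 1) := by
    set F : ℝ → ℝ := (Set.Ioi (1 : ℝ)).indicator f with hF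
    have hF1 : IntegrableOn F (Set.Ioi (0 : ℝ)) := by
      rw [IntegrableOn, hF]
      rw [integrable_indicator_iff measurableSet_Ioi]
      rw [IntegrableOn, Measure.restrict_restrict measurableSet_Ioi]
      have hsub : Set.Ioi (1 : ℝ) ⊆ Set.Ioi 0 := fun x hx => Set.mem_Ioi.mpr (lt_trans one_pos (Set.mem_Ioi.mp hx))
      rw [Set.inter_eq_self_of_subset_left hsub]
      exact h1
    have h3 := (integrableOn_Ioi_comp_rpow_iff F (p := (-1 : ℝ)) (by norm_num)).mpr hF1
    have h4 : IntegrableOn ((Set.Ioo (0 : ℝ) 1).indicator f) (Set.Ioi (0 : ℝ)) := by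
      apply h3.congr_fun ?_ measurableSet_Ioi
      intro x hx
      have hx0 : (0 : ℝ) < x := hx
      have hxinv : x ^ ((-1 : ℝ)) = x⁻¹ := Real.rpow_neg_one x
      have hx2 : x ^ ((-1 : ℝ) - 1) = (x ^ 2)⁻¹ := by
        rw [show (-1 : ℝ) - 1 = -2 by ring, Real.rpow_neg (le_of_lt hx0)]
        norm_num
      simp only [smul_eq_mul]
      rw [hxinv, hx2, hF]
      by_cases hlt : x < 1
      · have hmem : x⁻¹ ∈ Set.Ioi (1 : ℝ) := by
          rw [Set.mem_Ioi]
          rw [lt_inv_comm₀ one_pos hx0]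
          simpa using hlt
        rw [Set.indicator_of_mem hmem, Set.indicator_of_mem (by exact ⟨hx0, hlt⟩)]
        rw [hf]
        simp only [inv_inv, Real.log_inv, abs_neg]
        field_simp
        ring
      · have hnmem : x⁻¹ ∉ Set.Ioi (1 : ℝ) := by
          rw [Set.mem_Ioi, not_lt]
          rw [inv_le_one_iff₀]
          right; linarith [not_lt.mp hlt]
        rw [Set.indicator_of_notMem hnmem,
          Set.indicator_of_notMem (by intro h; exact hlt h.2)]
        simp
    rw [IntegrableOn] at h4
    rw [integrable_indicator_iff measurableSet_Ioo] at h4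
    rw [IntegrableOn, Measure.restrict_restrict measurableSet_Ioo] at h4
    have hsub : Set.Ioo (0 : ℝ) 1 ⊆ Set.Ioi 0 := fun x hx => hx.1
    rwa [Set.inter_eq_self_of_subset_left hsub] at h4
  have h2' : IntegrableOn f (Set.Ioc (0 : ℝ) 1) := h2.congr_set_ae Ioo_ae_eq_Ioc.symm
  have := h2'.union h1
  rwa [Set.Ioc_union_Ioi_eq_Ioi (by norm_num : (0:ℝ) ≤ 1)] at this

lemma lintegral_ofReal_lt_top_of_integrableOn {f : ℝ → ℝ} {s : Set ℝ}
    (h : IntegrableOn f s) : ∫⁻ x in s, ENNReal.ofReal (f x) < ⊤ :=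
  lt_of_le_of_lt (lintegral_mono fun x => Real.ofReal_le_enorm _) h.2

lemma lintegral_ball_rpow_lt_top {a : ℝ} (ha : -2 < a) :
    ∫⁻ w : ℂ in Metric.ball (0 : ℂ) 2, ENNReal.ofReal (‖w‖ ^ a) < ⊤ := by
  set g : ℝ → ℝ≥0∞ := (Set.Iio (2 : ℝ)).indicator (fun r => ENNReal.ofReal (r ^ a)) with hg
  have hgmeas : Measurable g :=
    Measurable.indicator (by measurability) measurableSet_Iio
  have h0 : ∫⁻ w : ℂ in Metric.ball (0 : ℂ) 2, ENNReal.ofReal (‖w‖ ^ a) =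
      ∫⁻ w : ℂ, g (‖w‖) := by
    rw [← lintegral_indicator measurableSet_ball]
    congr 1
    funext w
    by_cases hw : w ∈ Metric.ball (0 : ℂ) 2
    · have h2 : ‖w‖ ∈ Set.Iio (2 : ℝ) := by
        simpa using mem_ball_zero_iff.mp hw
      rw [Set.indicator_of_mem hw, hg, Set.indicator_of_mem h2]
    · have h2 : ‖w‖ ∉ Set.Iio (2 : ℝ) := by
        intro h
        exact hw (mem_ball_zero_iff.mpr (by simpa using h))
      rw [Set.indicator_of_notMem hw, hg, Set.indicator_of_notMem h2]
  rw [h0, lintegral_complex_radial g hgmeas]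
  apply ENNReal.mul_lt_top ENNReal.ofReal_lt_top
  have h1 : ∫⁻ r in Set.Ioi (0 : ℝ), ENNReal.ofReal r * g r =
      ∫⁻ r in Set.Ioi (0 : ℝ),
        (Set.Iio (2 : ℝ)).indicator (fun r => ENNReal.ofReal r * ENNReal.ofReal (r ^ a)) r := by
    congr 1
    funext r
    rw [hg]
    by_cases hr : r ∈ Set.Iio (2 : ℝ)
    · rw [Set.indicator_of_mem hr, Set.indicator_of_mem hr]
    · rw [Set.indicator_of_notMem hr, Set.indicator_of_notMem hr, mul_zero]
  rw [h1, lintegral_indicator measurableSet_Iio, Measure.restrict_restrict measurableSet_Iio]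
  have h2 : Set.Iio (2 : ℝ) ∩ Set.Ioi 0 = Set.Ioo (0 : ℝ) 2 := by
    ext x; simp [Set.mem_Ioo, and_comm]
  rw [h2]
  have h3 : ∫⁻ r in Set.Ioo (0 : ℝ) 2, ENNReal.ofReal r * ENNReal.ofReal (r ^ a) =
      ∫⁻ r in Set.Ioo (0 : ℝ) 2, ENNReal.ofReal (r ^ (1 + a)) := by
    apply setLIntegral_congr_fun measurableSet_Ioo
    intro r hr
    dsimp only
    rw [← ENNReal.ofReal_mul (le_of_lt hr.1)]
    congr 1
    rw [Real.rpow_add hr.1, Real.rpow_one]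
  rw [h3]
  apply lintegral_ofReal_lt_top_of_integrableOn
  have h4 : IntegrableOn (fun x : ℝ => x ^ (1 + a)) (Set.Ioc (0 : ℝ) 2) :=
    (intervalIntegral.intervalIntegrable_rpow' (by linarith)).1
  exact h4.mono_set Set.Ioo_subset_Ioc_self

lemma lintegral_log_weight_complex_lt_top {q : ℝ} (hq : 1 < q) :
    ∫⁻ w : ℂ, ENNReal.ofReal
      ((‖w‖ ^ 2)⁻¹ * (1 + |Real.log (‖w‖ ^ 2)|) ^ (-q)) < ⊤ := by
  set g : ℝ → ℝ≥0∞ := fun r => ENNReal.ofReal ((r ^ 2)⁻¹ * (1 + |Real.log (r ^ 2)|) ^ (-q))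
    with hg
  have hgmeas : Measurable g := by
    apply ENNReal.measurable_ofReal.comp
    measurability
  have h0 : ∫⁻ w : ℂ, ENNReal.ofReal
      ((‖w‖ ^ 2)⁻¹ * (1 + |Real.log (‖w‖ ^ 2)|) ^ (-q)) =
      ∫⁻ w : ℂ, g (‖w‖) := rfl
  rw [h0, lintegral_complex_radial g hgmeas]
  apply ENNReal.mul_lt_top ENNReal.ofReal_lt_top
  have h1 : ∫⁻ r in Set.Ioi (0 : ℝ), ENNReal.ofReal r * g r =
      ∫⁻ r in Set.Ioi (0 : ℝ), ENNReal.ofReal (r⁻¹ * (1 + 2 * |Real.log r|) ^ (-q)) := by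
    apply setLIntegral_congr_fun measurableSet_Ioi
    intro r hr
    have hr0 : (0 : ℝ) < r := hr
    show ENNReal.ofReal r * g r = _
    rw [hg]
    rw [← ENNReal.ofReal_mul (le_of_lt hr0)]
    congr 1
    have hlog : Real.log (r ^ 2) = 2 * Real.log r := by
      rw [Real.log_pow]; norm_num
    have habs : |Real.log (r ^ 2)| = 2 * |Real.log r| := by
      rw [hlog, abs_mul]; norm_num
    rw [habs]
    field_simp
  rw [h1]
  exact lintegral_ofReal_lt_top_of_integrableOn (integrable_log_weight hq)

lemma Ffun_norm {z : ℂ × ℂ} (hz : z ∈ wormW) (α : ℂ) (c : ℝ) (j : ℤ) (m : ℕ) :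
    ‖Ffun α c j m z‖ =
      Real.exp (α.re * Real.log (‖z.1‖) - α.im * ((zfun z).arg + sfun z)
        + (j : ℝ) * Real.log (‖z.2‖)) / ‖Lfun z - (c : ℂ)‖ ^ m := by
  have h1 : ‖Complex.exp (α * Lfun z)‖ =
      Real.exp (α.re * Real.log (‖z.1‖) - α.im * ((zfun z).arg + sfun z)) := by
    rw [Complex.norm_exp]
    congr 1
    rw [Complex.mul_re, Lfun_re hz, Lfun_im]
  have h2 : ‖z.2 ^ j‖ = Real.exp ((j : ℝ) * Real.log (‖z.2‖)) := by
    rw [norm_zpow, ← Real.rpow_intCast, Real.rpow_def_of_pos (norm_pos_iff.mpr hz.1), mul_comm]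
  rw [Ffun, norm_div, norm_mul, norm_pow, h1, h2, ← Real.exp_add]

lemma Ffun_memℒp_finite {p : ℝ≥0∞} (hp : 0 < p) (hptop : p ≠ ⊤) (α : ℂ) (j : ℤ) {c : ℝ}
    (hc : Real.log 2 < c) (m : ℕ)
    (hα : α.re > -(2 * (p⁻¹).toReal)) (hm : (m : ℝ) > (p⁻¹).toReal)
    (him : α.im = (j : ℝ) / 2 + (p⁻¹).toReal) :
    MemLp (Ffun α c j m) p (volume.restrict wormW) := by
  have haesm : AEStronglyMeasurable (Ffun α c j m) (volume.restrict wormW) :=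
    ((Ffun_differentiableOn hc α j m).continuousOn).aestronglyMeasurable
      wormW_isOpen.measurableSet
  set t := p.toReal with htdef
  have ht : 0 < t := ENNReal.toReal_pos hp.ne' hptop
  have hinv : (p⁻¹).toReal = t⁻¹ := by rw [ENNReal.toReal_inv]
  have ha2 : -2 < t * α.re := by
    rw [hinv] at hα
    have h1 : t * -(2 * t⁻¹) < t * α.re := mul_lt_mul_of_pos_left hα ht
    have h2 : t * -(2 * t⁻¹) = -2 := by field_simp
    linarith
  have hq1 : 1 < t * m := by
    rw [hinv] at hm
    have h1 : t * t⁻¹ < t * m := mul_lt_mul_of_pos_left hm ht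
    rwa [mul_inv_cancel₀ ht.ne'] at h1
  have him' : α.im = (j : ℝ) / 2 + t⁻¹ := by rw [him, hinv]
  set δ : ℝ := c - Real.log 2 with hδdef
  have hδ : 0 < δ := by rw [hδdef]; linarith
  have hπ : 0 < Real.pi := Real.pi_pos
  set ε : ℝ := min (δ / (1 + Real.pi)) (1 / 4) with hεdef
  have hε : 0 < ε := lt_min (by positivity) (by norm_num)
  have hexp_rpow : ∀ x : ℝ, (Real.exp x) ^ t = Real.exp (x * t) := fun x => by
    rw [← Real.exp_one_rpow x, ← Real.rpow_mul (le_of_lt (Real.exp_pos 1)), Real.exp_one_rpow]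
  -- the pointwise bound
  have key : ∀ z ∈ wormW, ‖Ffun α c j m z‖ ^ t ≤
      (Real.exp (|α.im| * t * (Real.pi / 2)) * ε ^ (-(t * m))) *
        (‖z.1‖ ^ (t * α.re) *
          ((‖z.2‖ ^ 2)⁻¹ *
            (1 + |Real.log (‖z.2‖ ^ 2)|) ^ (-(t * m)))) := by
    intro z hz
    obtain ⟨_, _, _, hz10, habs2, _⟩ := worm_facts hz
    have habs1 : 0 < ‖z.1‖ := norm_pos_iff.mpr hz10
    have habs2' : 0 < ‖z.2‖ := norm_pos_iff.mpr hz.1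
    have hsrw : Real.log (‖z.2‖ ^ 2) = sfun z := rfl
    rw [hsrw]
    set s : ℝ := sfun z with hs
    set θ : ℝ := (zfun z).arg with hθ
    set D : ℝ := ‖Lfun z - (c : ℂ)‖ with hD
    have hD1 : δ ≤ D := Lfun_sub_abs_ge hz hc
    have hD2 : |s| - Real.pi / 2 ≤ D := Lfun_sub_abs_ge' hz c
    have hDpos : 0 < D := lt_of_lt_of_le hδ hD1
    have hθle : |θ| ≤ Real.pi / 2 := le_of_lt (arg_zfun_lt hz)
    have hεD : ε * (1 + |s|) ≤ D := by
      rcases le_or_gt |s| Real.pi with h | h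
      · have h1 : ε * (1 + |s|) ≤ δ / (1 + Real.pi) * (1 + Real.pi) :=
          mul_le_mul (min_le_left _ _) (by linarith) (by positivity) (by positivity)
        have h2 : δ / (1 + Real.pi) * (1 + Real.pi) = δ := by field_simp
        linarith
      · have h1 : ε * (1 + |s|) ≤ 1 / 4 * (1 + |s|) :=
          mul_le_mul_of_nonneg_right (min_le_right _ _) (by positivity)
        nlinarith [abs_nonneg s, Real.pi_gt_three]
    have hlog2 : Real.log (‖z.2‖) = s / 2 := by
      rw [hs, sfun, Real.log_pow]
      norm_num
    have hE : α.re * Real.log (‖z.1‖) - α.im * (θ + s)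
        + (j : ℝ) * Real.log (‖z.2‖)
        = α.re * Real.log (‖z.1‖) - α.im * θ - t⁻¹ * s := by
      rw [him', hlog2]; ring
    have hnorm := Ffun_norm hz α c j m
    rw [← hs, ← hθ, ← hD, hE] at hnorm
    have hsplit : ‖Ffun α c j m z‖ ^ t =
        Real.exp (t * α.re * Real.log (‖z.1‖)) * Real.exp (-(α.im * t * θ)) *
          Real.exp (-s) / D ^ (t * m) := by
      rw [hnorm, Real.div_rpow (le_of_lt (Real.exp_pos _)) (pow_nonneg hDpos.le m)]
      congr 1
      · rw [hexp_rpow, ← Real.exp_add, ← Real.exp_add]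
        congr 1
        field_simp
        ring
      · rw [← Real.rpow_natCast D m, ← Real.rpow_mul hDpos.le]
        congr 1
        ring
    have hnum1 : Real.exp (t * α.re * Real.log (‖z.1‖)) =
        ‖z.1‖ ^ (t * α.re) := by
      rw [Real.rpow_def_of_pos habs1]
      congr 1
      ring
    have hnum2 : Real.exp (-(α.im * t * θ)) ≤ Real.exp (|α.im| * t * (Real.pi / 2)) := by
      apply Real.exp_le_exp.mpr
      calc -(α.im * t * θ) ≤ |α.im * t * θ| := neg_le_abs _
        _ = |α.im| * t * |θ| := by rw [abs_mul, abs_mul, abs_of_pos ht]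
        _ ≤ |α.im| * t * (Real.pi / 2) :=
            mul_le_mul_of_nonneg_left hθle (by positivity)
    have hnum3 : Real.exp (-s) = (‖z.2‖ ^ 2)⁻¹ := by
      rw [Real.exp_neg]
      congr 1
      rw [hs, sfun, Real.exp_log (by positivity)]
    have hden : (ε * (1 + |s|)) ^ (t * m) ≤ D ^ (t * m) :=
      Real.rpow_le_rpow (by positivity) hεD (by positivity)
    have hden_pos : (0 : ℝ) < (ε * (1 + |s|)) ^ (t * m) :=
      Real.rpow_pos_of_pos (by positivity) _
    calc ‖Ffun α c j m z‖ ^ t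
        = Real.exp (t * α.re * Real.log (‖z.1‖)) * Real.exp (-(α.im * t * θ)) *
            Real.exp (-s) / D ^ (t * m) := hsplit
      _ ≤ ‖z.1‖ ^ (t * α.re) * Real.exp (|α.im| * t * (Real.pi / 2)) *
            (‖z.2‖ ^ 2)⁻¹ / (ε * (1 + |s|)) ^ (t * m) := by
          apply div_le_div₀ (by positivity) ?_ hden_pos hden
          rw [← hnum1, ← hnum3]
          exact mul_le_mul_of_nonneg_right
            (mul_le_mul_of_nonneg_left hnum2 (le_of_lt (Real.exp_pos _)))
            (le_of_lt (Real.exp_pos _))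
      _ = (Real.exp (|α.im| * t * (Real.pi / 2)) * ε ^ (-(t * m))) *
            (‖z.1‖ ^ (t * α.re) *
              ((‖z.2‖ ^ 2)⁻¹ * (1 + |s|) ^ (-(t * m)))) := by
          rw [div_eq_mul_inv, ← Real.rpow_neg (by positivity),
            Real.mul_rpow hε.le (by positivity)]
          ring
  -- now the integral estimate
  refine ⟨haesm, ?_⟩
  rw [eLpNorm_eq_lintegral_rpow_enorm_toReal hp.ne' hptop]
  refine ENNReal.rpow_lt_top_of_nonneg (by positivity) (ne_of_lt ?_)
  set K : ℝ≥0∞ := ENNReal.ofReal (Real.exp (|α.im| * t * (Real.pi / 2)) * ε ^ (-(t * m)))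
    with hK
  set G : ℂ → ℝ≥0∞ := fun w => ENNReal.ofReal (‖w‖ ^ (t * α.re)) with hG
  set H : ℂ → ℝ≥0∞ := fun w => ENNReal.ofReal
    ((‖w‖ ^ 2)⁻¹ * (1 + |Real.log (‖w‖ ^ 2)|) ^ (-(t * m))) with hH
  have habsm : Measurable (fun w : ℂ => ‖w‖) := continuous_norm.measurable
  have hGm : Measurable G := by
    apply ENNReal.measurable_ofReal.comp
    exact ((measurable_id'.pow_const (t * α.re)).comp habsm)
  have hHm : Measurable H := by
    apply ENNReal.measurable_ofReal.comp
    have h1 : Measurable fun w : ℂ => (‖w‖ ^ 2)⁻¹ := (habsm.pow_const 2).inv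
    have h2 : Measurable fun w : ℂ =>
        (1 + |Real.log (‖w‖ ^ 2)|) ^ (-(t * m)) := by
      exact (measurable_id'.pow_const (-(t * (m : ℝ)))).comp
        ((Real.measurable_log.comp (habsm.pow_const 2)).abs.const_add 1)
    exact h1.mul h2
  have hcalc : ∫⁻ z, (‖Ffun α c j m z‖₊ : ℝ≥0∞) ^ t ∂(volume.restrict wormW) < ⊤ := by
    calc ∫⁻ z, (‖Ffun α c j m z‖₊ : ℝ≥0∞) ^ t ∂(volume.restrict wormW)
        ≤ ∫⁻ z in wormW, K * (G z.1 * H z.2) ∂volume := by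
          apply setLIntegral_mono
          · exact (measurable_const.mul
              ((hGm.comp measurable_fst).mul (hHm.comp measurable_snd)))
          intro z hz
          rw [← enorm_eq_nnnorm, ← ofReal_norm,
            ENNReal.ofReal_rpow_of_nonneg (norm_nonneg _) ht.le]
          calc ENNReal.ofReal (‖Ffun α c j m z‖ ^ t)
              ≤ ENNReal.ofReal ((Real.exp (|α.im| * t * (Real.pi / 2)) * ε ^ (-(t * m))) *
                  (‖z.1‖ ^ (t * α.re) *
                    ((‖z.2‖ ^ 2)⁻¹ *
                      (1 + |Real.log (‖z.2‖ ^ 2)|) ^ (-(t * m))))) :=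
                ENNReal.ofReal_le_ofReal (key z hz)
            _ = K * (G z.1 * H z.2) := by
                rw [hK, hG, hH, ENNReal.ofReal_mul (by positivity),
                  ENNReal.ofReal_mul (by positivity),
                  ENNReal.ofReal_mul
                    (by positivity : (0:ℝ) ≤ ‖z.1‖ ^ (t * α.re))]
      _ ≤ ∫⁻ z in (Metric.ball (0 : ℂ) 2) ×ˢ (Set.univ : Set ℂ),
            K * (G z.1 * H z.2) ∂volume := by
          apply lintegral_mono_set
          intro z hz
          constructor
          · rw [mem_ball_zero_iff]
            exact (worm_facts hz).2.2.2.2.1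
          · trivial
      _ = K * ((∫⁻ w in Metric.ball (0 : ℂ) 2, G w) * ∫⁻ w, H w) := by
          rw [lintegral_const_mul' _ _ ENNReal.ofReal_ne_top]
          congr 1
          rw [Measure.volume_eq_prod, ← Measure.prod_restrict,
            lintegral_prod_mul hGm.aemeasurable hHm.aemeasurable, Measure.restrict_univ]
      _ < ⊤ := by
          apply ENNReal.mul_lt_top ENNReal.ofReal_lt_top
          exact ENNReal.mul_lt_top (lintegral_ball_rpow_lt_top ha2)
            (lintegral_log_weight_complex_lt_top hq1)
  exact hcalc

lemma Ffun_memℒp_top (α : ℂ) (hα : 0 < α.re) (j : ℤ) {c : ℝ} (hc : Real.log 2 < c) (m : ℕ)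
    (him : α.im = (j : ℝ) / 2) :
    MemLp (Ffun α c j m) ⊤ (volume.restrict wormW) := by
  have haesm : AEStronglyMeasurable (Ffun α c j m) (volume.restrict wormW) :=
    ((Ffun_differentiableOn hc α j m).continuousOn).aestronglyMeasurable
      wormW_isOpen.measurableSet
  have hδ : 0 < c - Real.log 2 := by linarith
  apply memLp_top_of_bound haesm
    (Real.exp (α.re * Real.log 2 + |(j : ℝ)| / 2 * (Real.pi / 2)) / (c - Real.log 2) ^ m)
  rw [ae_restrict_iff' wormW_isOpen.measurableSet]
  apply ae_of_all
  intro z hz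
  obtain ⟨_, _, _, hz10, habs2, _⟩ := worm_facts hz
  have habs1 : 0 < ‖z.1‖ := norm_pos_iff.mpr hz10
  have hθle : |(zfun z).arg| ≤ Real.pi / 2 := le_of_lt (arg_zfun_lt hz)
  have hlog2 : Real.log (‖z.2‖) = sfun z / 2 := by
    rw [sfun, Real.log_pow]; norm_num
  have hloglt : Real.log (‖z.1‖) < Real.log 2 := by
    have := Lfun_re_lt hz
    rwa [Lfun_re hz] at this
  rw [Ffun_norm hz]
  have hE : α.re * Real.log (‖z.1‖) - α.im * ((zfun z).arg + sfun z)
      + (j : ℝ) * Real.log (‖z.2‖)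
      = α.re * Real.log (‖z.1‖) - (j : ℝ) / 2 * (zfun z).arg := by
    rw [him, hlog2]; ring
  rw [hE]
  have hnum : α.re * Real.log (‖z.1‖) - (j : ℝ) / 2 * (zfun z).arg ≤
      α.re * Real.log 2 + |(j : ℝ)| / 2 * (Real.pi / 2) := by
    have h1 : α.re * Real.log (‖z.1‖) ≤ α.re * Real.log 2 :=
      mul_le_mul_of_nonneg_left hloglt.le hα.le
    have h2 : -((j : ℝ) / 2 * (zfun z).arg) ≤ |(j : ℝ)| / 2 * (Real.pi / 2) := by
      calc -((j : ℝ) / 2 * (zfun z).arg) ≤ |(j : ℝ) / 2 * (zfun z).arg| := neg_le_abs _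
        _ = |(j : ℝ)| / 2 * |(zfun z).arg| := by rw [abs_mul, abs_div, abs_two]
        _ ≤ |(j : ℝ)| / 2 * (Real.pi / 2) :=
            mul_le_mul_of_nonneg_left hθle (by positivity)
    linarith
  have hpow : (c - Real.log 2) ^ m ≤ ‖Lfun z - (c : ℂ)‖ ^ m :=
    pow_le_pow_left₀ hδ.le (Lfun_sub_abs_ge hz hc) m
  exact div_le_div₀ (le_of_lt (Real.exp_pos _)) (Real.exp_le_exp.mpr hnum)
    (by positivity) hpow

lemma Ffun_main (p : ℝ≥0∞) (hp : 0 < p)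
    (α : ℂ) (hα : α.re > -(2 * (p⁻¹).toReal)) (j : ℤ)
    {c : ℝ} (hc : Real.log 2 < c) (m : ℕ) (hm : (m : ℝ) > (p⁻¹).toReal)
    (him : α.im = (j : ℝ) / 2 + (p⁻¹).toReal) :
    DifferentiableOn ℂ (Ffun α c j m) wormW ∧
      MemLp (Ffun α c j m) p (volume.restrict wormW) := by
  refine ⟨Ffun_differentiableOn hc α j m, ?_⟩
  by_cases hptop : p = ⊤
  · subst hptop
    simp only [ENNReal.inv_top, ENNReal.toReal_zero] at hα him
    norm_num at hα him
    exact Ffun_memℒp_top α hα j hc m him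
  · exact Ffun_memℒp_finite hp hptop α j hc m hα hm him

theorem Ffun_mem_bergman (p : ℝ≥0∞) (hp : 0 < p)
    (α : ℂ) (hα : α.re > -(2 * (p⁻¹).toReal)) (j : ℤ)
    (c : ℝ) (hc : Real.log 2 < c) (m : ℕ) (hm : (m : ℝ) > (p⁻¹).toReal)
    (him : α.im = (j : ℝ) / 2 + (p⁻¹).toReal) :
    (DifferentiableOn ℂ (Ffun α c j m) wormW ∧
      MemLp (Ffun α c j m) p (volume.restrict wormW)) ∧
    ∃ fs : ℕ → (ℂ × ℂ → ℂ),
      (∀ k, DifferentiableOn ℂ (fs k) wormW ∧ MemLp (fs k) p (volume.restrict wormW)) ∧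
      LinearIndependent ℂ (fun k => wormW.restrict (fs k)) := by
  have main : ∀ k : ℕ, DifferentiableOn ℂ (Ffun α c j (m + k)) wormW ∧
      MemLp (Ffun α c j (m + k)) p (volume.restrict wormW) := by
    intro k
    apply Ffun_main p hp α hα j hc (m + k) ?_ him
    push_cast
    have : (0 : ℝ) ≤ k := Nat.cast_nonneg k
    linarith
  refine ⟨main 0, ⟨fun k => Ffun α c j (m + k), fun k => main k, ?_⟩⟩
  rw [linearIndependent_iff']
  intro sFin g hsum i hi
  set P : Polynomial ℂ := ∑ k ∈ sFin, Polynomial.C (g k) * Polynomial.X ^ k with hP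
  have hroot : ∀ x : ℝ, P.IsRoot ((Complex.I * x - c)⁻¹) := by
    intro x
    set z : ℂ × ℂ := (Complex.exp (Complex.I * x), ((Real.exp (x / 2) : ℝ) : ℂ)) with hzdef
    have hz2 : z.2 ≠ 0 := Complex.ofReal_ne_zero.mpr (Real.exp_pos _).ne'
    have habs : ‖z.2‖ ^ 2 = Real.exp x := by
      rw [hzdef]
      simp only [Complex.norm_real, Real.norm_eq_abs, abs_of_pos (Real.exp_pos _)]
      rw [sq, ← Real.exp_add]
      norm_num
    have hlogs : Real.log (‖z.2‖ ^ 2) = x := by rw [habs, Real.log_exp]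
    have hcast : ((Real.log (‖z.2‖ ^ 2) : ℝ) : ℂ) = (x : ℂ) := by rw [hlogs]
    have hzW : z ∈ wormW := by
      refine ⟨hz2, ?_⟩
      rw [hcast]
      have : z.1 - Complex.exp (Complex.I * (x : ℂ)) = 0 := sub_self _
      rw [this]
      norm_num
    have hLz : Lfun z = Complex.I * (x : ℂ) := by
      rw [Lfun, hcast]
      have h1 : z.1 * Complex.exp (-Complex.I * (x : ℂ)) = 1 := by
        rw [hzdef]
        simp only []
        rw [← Complex.exp_add]
        norm_num
      rw [h1, Complex.log_one, zero_add]
    have hu : Lfun z - (c : ℂ) = Complex.I * (x : ℂ) - (c : ℂ) := by rw [hLz]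
    have hLne : Lfun z - (c : ℂ) ≠ 0 := Lfun_sub_ne hzW hc
    have hz0 := congrFun hsum ⟨z, hzW⟩
    simp only [Finset.sum_apply, Pi.smul_apply, Set.restrict_apply, smul_eq_mul,
      Pi.zero_apply] at hz0
    have hfact : ∀ k : ℕ, Ffun α c j (m + k) z =
        Ffun α c j m z * ((Lfun z - (c : ℂ))⁻¹) ^ k := by
      intro k
      rw [Ffun, Ffun, pow_add, inv_pow]
      field_simp
    have hF0 : Ffun α c j m z ≠ 0 := by
      rw [Ffun]
      apply div_ne_zero
      · exact mul_ne_zero (Complex.exp_ne_zero _) (zpow_ne_zero j hz2)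
      · exact pow_ne_zero m hLne
    have hsum2 : ∑ k ∈ sFin, g k * ((Lfun z - (c : ℂ))⁻¹) ^ k = 0 := by
      have h1 : ∑ k ∈ sFin, g k * Ffun α c j (m + k) z =
          Ffun α c j m z * ∑ k ∈ sFin, g k * ((Lfun z - (c : ℂ))⁻¹) ^ k := by
        rw [Finset.mul_sum]
        apply Finset.sum_congr rfl
        intro k _
        rw [hfact k]
        ring
      rw [show ∑ k ∈ sFin, g k * Ffun α c j (m + k) z = 0 from hz0] at h1
      exact (mul_eq_zero.mp h1.symm).resolve_left hF0
    rw [Polynomial.IsRoot, hP]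
    rw [Polynomial.eval_finset_sum]
    simp only [Polynomial.eval_mul, Polynomial.eval_C, Polynomial.eval_pow, Polynomial.eval_X]
    rw [← hu]
    exact hsum2
  have hinj : Function.Injective (fun x : ℝ => (Complex.I * (x : ℂ) - (c : ℂ))⁻¹) := by
    have hcne : ∀ x : ℝ, Complex.I * (x : ℂ) - (c : ℂ) ≠ 0 := by
      intro x h
      have hre := congrArg Complex.re h
      simp only [Complex.sub_re, Complex.mul_re, Complex.I_re, Complex.I_im,
        Complex.ofReal_re, Complex.ofReal_im, Complex.zero_re] at hre
      have hlog2 : (0 : ℝ) < Real.log 2 := Real.log_pos (by norm_num)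
      have : c = 0 := by linarith [hre]
      linarith
    intro a b hab
    simp only at hab
    rw [inv_inj] at hab
    have h1 : Complex.I * (a : ℂ) = Complex.I * (b : ℂ) := sub_left_inj.mp hab
    have h2 : (a : ℂ) = (b : ℂ) := mul_left_cancel₀ Complex.I_ne_zero h1
    exact Complex.ofReal_inj.mp h2
  have hPzero : P = 0 := by
    apply Polynomial.eq_zero_of_infinite_isRoot
    apply Set.Infinite.mono ?_ (Set.infinite_range_of_injective hinj)
    rintro w ⟨x, rfl⟩
    exact hroot x
  have hcoeff := congrArg (fun q : Polynomial ℂ => q.coeff i) hPzero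
  simp only [hP, Polynomial.finset_sum_coeff, Polynomial.coeff_C_mul_X_pow,
    Polynomial.coeff_zero] at hcoeff
  rwa [Finset.sum_ite_eq sFin i g, if_pos hi] at hcoeff
end
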